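/- arXiv:0804.2357 — 3 statements merged into one kernel-verified Lean document; each statement's English description precedes it below -/
import Mathlib

section
/- Let h be a Floyd function on the regular tree 𝒯_n with base vertex x₀, and let p, p' be two distinct boundary points. If R is the combinatorial distance from x₀ to the unique bi-infinite geodesic joining p and p', then the Floyd distance satisfies δ(p, p') ≤ 2·∑_{r≥R} h(r), with equality when the geodesic from x₀ to its nearest point on that geodesic realizes the infimum (as stated in the paper, δ(p,p') = 2·∑_{r≥R} h(r)). -/
open SimpleGraph

/-- The Floyd length of a walk with base vertex `x₀` and Floyd function `h`. -/
noncomputable def floydLength {V : Type*} (G : SimpleGraph V) (x₀ : V) (h : ℕ → ℝ)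
    {x y : V} (w : G.Walk x y) : ℝ :=
  (w.darts.map (fun d => h (min (G.dist x₀ d.toProd.1) (G.dist x₀ d.toProd.2)))).sum

/-!
Along the geodesic line `γ`, the combinatorial distance to `x₀` is `R + |i - i₀|`, where `γ i₀` is
the point of `γ` nearest to `x₀`: in a tree every vertex has at most one neighbour closer to `x₀`,
so a geodesic that has started to move away from `x₀` can never turn back. Hence the edges of `γ`
at distance `k` from `γ i₀` on either side carry the Floyd weight `h (R + k)`, the segment of `γ`
from `i₀ - N` to `i₀ + N` has Floyd length `2 ∑_{k<N} h (R + k)`, and letting `N → ∞` gives the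
distance of the two boundary points.
-/

namespace SimpleGraph

variable {V : Type*} {G : SimpleGraph V}

lemma Walk.dist_le_length_of_mem_support [DecidableEq V] {x u v : V} (p : G.Walk x u)
    (hv : v ∈ p.support) : G.dist x v ≤ p.length :=
  (dist_le _).trans (p.length_takeUntil_le_length hv)

lemma IsTree.eq_of_adj_of_dist_add_one_eq (hG : G.IsTree) (x : V) {u w v : V}
    (hu : G.Adj u v) (hw : G.Adj w v)
    (hdu : G.dist x u + 1 = G.dist x v) (hdw : G.dist x w + 1 = G.dist x v) : u = w := by
  classical
  obtain ⟨p, hp, -⟩ := hG.connected.exists_path_of_dist x v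
  have eq_penultimate : ∀ {y}, G.Adj y v → G.dist x y + 1 = G.dist x v → y = p.penultimate := by
    intro y hy hdy
    obtain ⟨q, hq, hqlen⟩ := hG.connected.exists_path_of_dist x y
    have hvq : v ∉ q.support := fun hv => by
      have := q.dist_le_length_of_mem_support hv
      omega
    exact hG.isAcyclic.eq_penultimate_of_adj_end hp hy.symm
      (hG.isAcyclic.mem_support_of_ne_mem_support_of_adj_of_isPath hp hq hy.symm hvq)
  rw [eq_penultimate hu hdu, eq_penultimate hw hdw]

def IsGeodesicRay (G : SimpleGraph V) (g : ℕ → V) : Prop :=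
  ∀ k m, G.dist (g k) (g (k + m)) = m

lemma IsGeodesicRay.adj {g : ℕ → V} (hg : G.IsGeodesicRay g) (k : ℕ) : G.Adj (g k) (g (k + 1)) :=
  dist_eq_one_iff_adj.mp (hg k 1)

lemma IsTree.dist_eq_add_of_isGeodesicRay (hG : G.IsTree) (x : V) {g : ℕ → V}
    (hg : G.IsGeodesicRay g) (h01 : G.dist x (g 0) ≤ G.dist x (g 1)) (k : ℕ) :
    G.dist x (g k) = G.dist x (g 0) + k := by
  have hadj := hg.adj
  have hne : ∀ k, g k ≠ g (k + 2) := fun k he => by simpa [he] using hg k 2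
  have hstep : ∀ k, G.dist x (g (k + 1)) = G.dist x (g k) + 1 := by
    intro k
    induction k with
    | zero =>
      have h0 : G.Adj (g 0) (g 1) := hadj 0
      have := hG.dist_ne_of_adj x h0
      rcases hG.dist_eq_dist_add_one_of_adj x h0 <;> omega
    | succ k ih =>
      rcases hG.dist_eq_dist_add_one_of_adj x (hadj (k + 1)) with hback | hforth
      · exact absurd (hG.eq_of_adj_of_dist_add_one_eq x (hadj k) (hadj (k + 1)).symm
          ih.symm hback.symm) (hne k)
      · exact hforth
  induction k with
  | zero => rfl
  | succ k ih => rw [hstep, ih, add_assoc]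

def Walk.ofSeq (f : ℕ → V) (hf : ∀ k, G.Adj (f k) (f (k + 1))) : (n : ℕ) → G.Walk (f 0) (f n)
  | 0 => nil
  | n + 1 => (Walk.ofSeq f hf n).concat (hf n)

@[simp]
lemma Walk.length_ofSeq (f : ℕ → V) (hf : ∀ k, G.Adj (f k) (f (k + 1))) (n : ℕ) :
    (Walk.ofSeq f hf n).length = n := by
  induction n with
  | zero => rfl
  | succ n ih => rw [Walk.ofSeq, Walk.length_concat, ih]

end SimpleGraph

section FloydLength

variable {V : Type*} {G : SimpleGraph V} (x₀ : V) (h : ℕ → ℝ)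

lemma floydLength_concat {x y z : V} (w : G.Walk x y) (hyz : G.Adj y z) :
    floydLength G x₀ h (w.concat hyz) =
      floydLength G x₀ h w + h (min (G.dist x₀ y) (G.dist x₀ z)) := by
  simp [floydLength, Walk.darts_concat]

lemma floydLength_append {x y z : V} (w : G.Walk x y) (w' : G.Walk y z) :
    floydLength G x₀ h (w.append w') = floydLength G x₀ h w + floydLength G x₀ h w' := by
  simp [floydLength, Walk.darts_append]

lemma floydLength_reverse {x y : V} (w : G.Walk x y) :
    floydLength G x₀ h w.reverse = floydLength G x₀ h w := by
  simp [floydLength, Walk.darts_reverse, Function.comp_def, min_comm]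

lemma floydLength_copy {x y x' y' : V} (w : G.Walk x y) (hx : x = x') (hy : y = y') :
    floydLength G x₀ h (w.copy hx hy) = floydLength G x₀ h w := by
  subst hx hy
  rfl

lemma floydLength_ofSeq (f : ℕ → V) (hf : ∀ k, G.Adj (f k) (f (k + 1))) (n : ℕ) :
    floydLength G x₀ h (Walk.ofSeq f hf n) =
      ∑ k ∈ Finset.range n, h (min (G.dist x₀ (f k)) (G.dist x₀ (f (k + 1)))) := by
  induction n with
  | zero => rfl
  | succ n ih => rw [Walk.ofSeq, floydLength_concat, ih, Finset.sum_range_succ]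

lemma SimpleGraph.IsTree.floydLength_ofSeq_of_isGeodesicRay (hG : G.IsTree) {g : ℕ → V}
    (hg : G.IsGeodesicRay g) (h01 : G.dist x₀ (g 0) ≤ G.dist x₀ (g 1)) (n : ℕ) :
    floydLength G x₀ h (Walk.ofSeq g hg.adj n) =
      ∑ k ∈ Finset.range n, h (G.dist x₀ (g 0) + k) := by
  rw [floydLength_ofSeq]
  refine Finset.sum_congr rfl fun k _ => ?_
  rw [hG.dist_eq_add_of_isGeodesicRay x₀ hg h01 k,
    hG.dist_eq_add_of_isGeodesicRay x₀ hg h01 (k + 1), min_eq_left (by omega)]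

end FloydLength

lemma Filter.Tendsto.comp_intCast_add {X : Type*} {l : Filter X} {g : ℤ → X}
    (hg : Filter.Tendsto (fun i : ℕ => g i) Filter.atTop l) (c : ℤ) :
    Filter.Tendsto (fun N : ℕ => g (c + N)) Filter.atTop l := by
  have hg' : Filter.Tendsto g Filter.atTop l := by
    rwa [← Nat.map_cast_int_atTop, Filter.tendsto_map'_iff]
  exact hg'.comp (Filter.tendsto_atTop_add_const_left _ c tendsto_natCast_atTop_atTop)

section GeodesicLine

variable {V : Type*} {G : SimpleGraph V} {γ : ℤ → V}

lemma isGeodesicRay_comp_of_dist_eq_abs (hγ : ∀ i j : ℤ, (G.dist (γ i) (γ j) : ℤ) = |i - j|)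
    {a : ℕ → ℤ} (ha : ∀ k m, |a k - a (k + m)| = m) : G.IsGeodesicRay (γ ∘ a) := fun k m => by
  have := hγ (a k) (a (k + m))
  rw [ha] at this
  exact_mod_cast this

theorem dist_floyd_eq_two_mul_sum_of_geodesic_line (hT : G.IsTree) (h : ℕ → ℝ) (x₀ : V)
    {X : Type*} [MetricSpace X] (ι : V → X)
    (hdist : ∀ (x y : V) (w : G.Walk x y), w.IsPath → dist (ι x) (ι y) = floydLength G x₀ h w)
    (hγ : ∀ i j : ℤ, (G.dist (γ i) (γ j) : ℤ) = |i - j|) {R : ℕ}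
    (hRmin : ∀ i : ℤ, R ≤ G.dist x₀ (γ i)) {i₀ : ℤ} (hi₀ : G.dist x₀ (γ i₀) = R) (N : ℕ) :
    dist (ι (γ (i₀ - N))) (ι (γ (i₀ + N))) = 2 * ∑ k ∈ Finset.range N, h (R + k) := by
  have floydLength_ray {a : ℕ → ℤ} (ha0 : a 0 = i₀) (ha : ∀ k m, |a k - a (k + m)| = m) :
      floydLength G x₀ h (Walk.ofSeq (γ ∘ a) (isGeodesicRay_comp_of_dist_eq_abs hγ ha).adj N) =
        ∑ k ∈ Finset.range N, h (R + k) := by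
    simpa [ha0, hi₀] using hT.floydLength_ofSeq_of_isGeodesicRay x₀ h
      (isGeodesicRay_comp_of_dist_eq_abs hγ ha) (by simpa [ha0, hi₀] using hRmin _) N
  have haL : ∀ k m : ℕ, |(i₀ - k) - (i₀ - (k + m : ℕ))| = m := fun k m => by push_cast; simp
  have haR : ∀ k m : ℕ, |(i₀ + k) - (i₀ + (k + m : ℕ))| = m := fun k m => by push_cast; simp
  set left := Walk.ofSeq _ (isGeodesicRay_comp_of_dist_eq_abs hγ haL).adj N
  set right := Walk.ofSeq _ (isGeodesicRay_comp_of_dist_eq_abs hγ haR).adj N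
  set w := left.reverse.append (right.copy (by simp) rfl)
  have hw : w.IsPath := by
    refine w.isPath_of_length_eq_dist ?_
    have hends : (G.dist (γ (i₀ - N)) (γ (i₀ + N)) : ℤ) = 2 * N := by
      rw [hγ, show i₀ - N - (i₀ + N) = -(2 * N : ℤ) by ring, abs_neg, abs_of_nonneg (by positivity)]
    simp only [w, left, right, Walk.length_append, Walk.length_reverse, Walk.length_copy,
      Walk.length_ofSeq, Function.comp_apply]
    omega
  refine (hdist _ _ w hw).trans ?_
  rw [floydLength_append, floydLength_reverse, floydLength_copy,
    floydLength_ray (by simp) haL, floydLength_ray (by simp) haR, two_mul]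

end GeodesicLine

theorem floyd_distance_between_boundary_points_general
    {V : Type*} (G : SimpleGraph V) (hT : G.IsTree)
    (h : ℕ → ℝ) (hsum : Summable h) (x₀ : V)
    {X : Type*} [MetricSpace X] (ι : V → X)
    (hdist : ∀ (x y : V) (w : G.Walk x y), w.IsPath →
      dist (ι x) (ι y) = floydLength G x₀ h w)
    (γ : ℤ → V) (hγ : ∀ i j : ℤ, (G.dist (γ i) (γ j) : ℤ) = |i - j|)
    (p p' : X)
    (hp : Filter.Tendsto (fun i : ℕ => ι (γ i)) Filter.atTop (nhds p))
    (hp' : Filter.Tendsto (fun i : ℕ => ι (γ (-i))) Filter.atTop (nhds p'))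
    (R : ℕ) (hRmin : ∀ i : ℤ, R ≤ G.dist x₀ (γ i))
    (hRatt : ∃ i : ℤ, G.dist x₀ (γ i) = R) :
    dist p p' = 2 * ∑' r : ℕ, h (R + r) := by
  obtain ⟨i₀, hi₀⟩ := hRatt
  have hright : Filter.Tendsto (fun N : ℕ => ι (γ (i₀ + N))) Filter.atTop (nhds p) :=
    hp.comp_intCast_add (g := ι ∘ γ) i₀
  have hleft : Filter.Tendsto (fun N : ℕ => ι (γ (i₀ - N))) Filter.atTop (nhds p') := by
    simpa [neg_add_eq_sub] using hp'.comp_intCast_add (g := fun i => ι (γ (-i))) (-i₀)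
  have htail : Summable fun r : ℕ => h (R + r) := by
    simpa only [add_comm R] using (summable_nat_add_iff R).mpr hsum
  have hfloyd : Filter.Tendsto (fun N : ℕ => dist (ι (γ (i₀ - N))) (ι (γ (i₀ + N))))
      Filter.atTop (nhds (2 * ∑' r : ℕ, h (R + r))) := by
    simp only [dist_floyd_eq_two_mul_sum_of_geodesic_line hT h x₀ ι hdist hγ hRmin hi₀]
    exact htail.hasSum.tendsto_sum_nat.const_mul 2
  rw [_root_.dist_comm]
  exact tendsto_nhds_unique (hleft.dist hright) hfloyd

/-- In the Floyd compactification of a regular tree (a metric space `X` in which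
the distance between vertices is the Floyd length of the connecting path), the
distance between two boundary points `p, p'` joined by the bi-infinite geodesic
`γ`, at combinatorial distance `R` from the base point `x₀`, equals
`2 ∑_{r ≥ R} h r`. -/
theorem floyd_distance_between_boundary_points
    {V : Type*} (G : SimpleGraph V) [G.LocallyFinite] (hT : G.IsTree)
    (n : ℕ) (hn : 3 ≤ n) (hreg : ∀ v : V, G.degree v = n)
    (h : ℕ → ℝ) (hpos : ∀ r, 0 < h r) (hsum : Summable h) (x₀ : V)
    {X : Type*} [MetricSpace X] (ι : V → X)
    (hdist : ∀ (x y : V) (w : G.Walk x y), w.IsPath →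
      dist (ι x) (ι y) = floydLength G x₀ h w)
    (γ : ℤ → V) (hγ : ∀ i j : ℤ, (G.dist (γ i) (γ j) : ℤ) = |i - j|)
    (p p' : X)
    (hp : Filter.Tendsto (fun i : ℕ => ι (γ i)) Filter.atTop (nhds p))
    (hp' : Filter.Tendsto (fun i : ℕ => ι (γ (-i))) Filter.atTop (nhds p'))
    (R : ℕ) (hRmin : ∀ i : ℤ, R ≤ G.dist x₀ (γ i))
    (hRatt : ∃ i : ℤ, G.dist x₀ (γ i) = R) :
    dist p p' = 2 * ∑' r : ℕ, h (R + r) :=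
  floyd_distance_between_boundary_points_general G hT h hsum x₀ ι hdist γ hγ p p' hp hp' R hRmin
    hRatt
end

section
/- Two Floyd metrics on the compactified regular tree obtained from the same base vertex x₀ and Floyd functions h₁, h₂ are locally Lipschitz equivalent if and only if h₁ and h₂ are comparable, i.e. there exists C > 1 with C⁻¹·h₂(r) ≤ h₁(r) ≤ C·h₂(r) for all r. -/
open SimpleGraph

/-!
An edge between levels `r` and `r + 1` of the tree has length `hᵢ r` in the `i`-th Floyd metric,
and every level carries such an edge because every vertex has a neighbour one level further out.
On the compact space `X₁` local bilipschitz constants can be taken uniform on all balls of a fixed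
radius `δ`; since `h₁ r → 0`, the level-`r` edges eventually fit in such balls, so `h₁ r` and `h₂ r`
are comparable for large `r`, and for the finitely many remaining `r` by positivity. Conversely,
both metrics measure the unique path between two vertices by Floyd lengths, so comparability of
`h₁` and `h₂` gives `d₂ ≤ C d₁` and `d₁ ≤ C d₂` on vertices, which passes to the closure.
-/

open Filter Metric Topology

namespace SimpleGraph

variable {V : Type*} {G : SimpleGraph V}

theorem IsTree.eq_penultimate_of_adj_of_dist_lt (hG : G.IsTree) {u v c : V} {p : G.Walk u v}
    (hp : p.IsPath) (hadj : G.Adj v c) (hlt : G.dist u c < G.dist u v) : c = p.penultimate := by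
  classical
  obtain ⟨q, hq, hqlen⟩ := (hG.connected u c).exists_path_of_dist
  have hv : v ∉ q.support := fun hv => by
    have := dist_le (q.takeUntil v hv)
    have := q.length_takeUntil_le_length hv
    omega
  exact hG.isAcyclic.eq_penultimate_of_adj_end hp hadj
    (hG.isAcyclic.mem_support_of_ne_mem_support_of_adj_of_isPath hp hq hadj hv)

theorem IsTree.exists_adj_dist_eq_add_one (hG : G.IsTree) (u : V) {v a b : V}
    (ha : G.Adj v a) (hb : G.Adj v b) (hab : a ≠ b) :
    ∃ w, G.Adj v w ∧ G.dist u w = G.dist u v + 1 := by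
  by_contra! hnot
  obtain ⟨p, hp, -⟩ := (hG.connected u v).exists_path_of_dist
  have hparent : ∀ c, G.Adj v c → c = p.penultimate := fun c hc =>
    hG.eq_penultimate_of_adj_of_dist_lt hp hc <| by
      have := hG.dist_eq_dist_add_one_of_adj u hc
      have := hnot c hc
      omega
  exact hab ((hparent a ha).trans (hparent b hb).symm)

theorem IsTree.exists_adj_dist_eq_and_dist_eq_add_one [G.LocallyFinite] (hG : G.IsTree)
    (hdeg : ∀ v, 2 ≤ G.degree v) (u : V) (r : ℕ) :
    ∃ v w, G.Adj v w ∧ G.dist u v = r ∧ G.dist u w = r + 1 := by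
  have hstep (v : V) : ∃ w, G.Adj v w ∧ G.dist u w = G.dist u v + 1 := by
    obtain ⟨a, ha, b, hb, hab⟩ := Finset.one_lt_card.1 (hdeg v)
    exact hG.exists_adj_dist_eq_add_one u ((mem_neighborFinset ..).1 ha)
      ((mem_neighborFinset ..).1 hb) hab
  induction r with
  | zero =>
    obtain ⟨w, hw, hdw⟩ := hstep u
    exact ⟨u, w, hw, dist_self, by simpa using hdw⟩
  | succ r ih =>
    obtain ⟨-, v, -, -, hv⟩ := ih
    obtain ⟨w, hw, hdw⟩ := hstep v
    exact ⟨v, w, hw, hv, hv ▸ hdw⟩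

end SimpleGraph

section Floyd

variable {V : Type*} {G : SimpleGraph V} {x₀ : V}

theorem floydLength_le_mul {h h' : ℕ → ℝ} {C : ℝ} (hle : ∀ r, h r ≤ C * h' r) {x y : V}
    (w : G.Walk x y) : floydLength G x₀ h w ≤ C * floydLength G x₀ h' w := by
  rw [floydLength, floydLength, ← List.sum_map_mul_left]
  exact List.sum_le_sum fun _ _ => hle _

variable {X : Type*} [PseudoMetricSpace X] {ι : V → X} {h : ℕ → ℝ}

theorem dist_eq_of_adj_of_dist_eq_add_one
    (hι : ∀ (x y : V) (w : G.Walk x y), w.IsPath → dist (ι x) (ι y) = floydLength G x₀ h w)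
    {u v : V} (hadj : G.Adj u v) {r : ℕ} (hu : G.dist x₀ u = r) (hv : G.dist x₀ v = r + 1) :
    dist (ι u) (ι v) = h r := by
  rw [hι u v _ (Walk.IsPath.of_adj hadj)]
  simp [floydLength, hu, hv]

theorem dist_le_mul_of_floyd_le_mul (hG : G.Connected) {Y : Type*} [PseudoMetricSpace Y]
    {κ : V → Y} {h' : ℕ → ℝ} {C : ℝ}
    (hι : ∀ (x y : V) (w : G.Walk x y), w.IsPath → dist (ι x) (ι y) = floydLength G x₀ h w)
    (hκ : ∀ (x y : V) (w : G.Walk x y), w.IsPath → dist (κ x) (κ y) = floydLength G x₀ h' w)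
    (hle : ∀ r, h r ≤ C * h' r) (x y : V) : dist (ι x) (ι y) ≤ C * dist (κ x) (κ y) := by
  obtain ⟨p, hp, -⟩ := (hG x y).exists_path_of_dist
  rw [hι x y p hp, hκ x y p hp]
  exact floydLength_le_mul hle p

end Floyd

section Bilipschitz

variable {X Y : Type*} [PseudoMetricSpace X] [PseudoMetricSpace Y]

def BilipschitzOnWith (K : ℝ) (f : X → Y) (s : Set X) : Prop :=
  ∀ q ∈ s, ∀ q' ∈ s, K⁻¹ * dist q q' ≤ dist (f q) (f q') ∧ dist (f q) (f q') ≤ K * dist q q'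

variable {K : ℝ} {f : X → Y} {s : Set X}

theorem BilipschitzOnWith.mono (hf : BilipschitzOnWith K f s) {t : Set X} (hts : t ⊆ s) :
    BilipschitzOnWith K f t :=
  fun q hq q' hq' => hf q (hts hq) q' (hts hq')

theorem BilipschitzOnWith.weaken (hf : BilipschitzOnWith K f s) (hK : 0 < K) {K' : ℝ}
    (hKK' : K ≤ K') : BilipschitzOnWith K' f s := fun q hq q' hq' => by
  obtain ⟨hlow, hhigh⟩ := hf q hq q' hq'
  exact ⟨le_trans (by gcongr) hlow, hhigh.trans (by gcongr)⟩

theorem exists_forall_bilipschitzOnWith_ball [CompactSpace X]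
    (hf : ∀ p, ∃ U ∈ 𝓝 p, ∃ K, 0 < K ∧ BilipschitzOnWith K f U) :
    ∃ δ > 0, ∃ K, 0 < K ∧ ∀ p, BilipschitzOnWith K f (ball p δ) := by
  choose U hU K hK hfK using hf
  obtain ⟨t, ht⟩ := isCompact_univ.elim_finite_subcover (fun p => interior (U p))
    (fun _ => isOpen_interior) fun p _ => Set.mem_iUnion.2 ⟨p, mem_interior_iff_mem_nhds.2 (hU p)⟩
  obtain ⟨δ, hδ, hball⟩ := lebesgue_number_lemma_of_metric (c := fun i : t => interior (U i))
    isCompact_univ (fun _ => isOpen_interior) (by rwa [Set.iUnion_subtype])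
  have hKt (i : t) : K i ≤ ∑ j ∈ t, K j + 1 := by
    have := Finset.single_le_sum (fun j _ => (hK j).le) i.2
    linarith
  have hKpos : 0 < ∑ j ∈ t, K j + 1 := by
    linarith [Finset.sum_nonneg fun j (_ : j ∈ t) => (hK j).le]
  refine ⟨δ, hδ, ∑ j ∈ t, K j + 1, hKpos, fun p => ?_⟩
  obtain ⟨i, hi⟩ := hball p (Set.mem_univ p)
  exact ((hfK i).mono (hi.trans interior_subset)).weaken (hK i) (hKt i)

theorem DenseRange.forall_dist_le_mul {V Z : Type*} [PseudoMetricSpace Z] {ι : V → X}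
    (hι : DenseRange ι) {f : X → Y} {g : X → Z} (hf : Continuous f) (hg : Continuous g) {C : ℝ}
    (hle : ∀ x y, dist (f (ι x)) (f (ι y)) ≤ C * dist (g (ι x)) (g (ι y))) (p q : X) :
    dist (f p) (f q) ≤ C * dist (g p) (g q) :=
  hι.induction_on₂ (p := fun p q => dist (f p) (f q) ≤ C * dist (g p) (g q))
    (isClosed_le (by fun_prop) (by fun_prop)) hle p q

end Bilipschitz

section Comparable

variable {f g : ℕ → ℝ}

theorem exists_forall_le_mul_of_eventually_le_mul (hg : ∀ r, 0 < g r) {K : ℝ}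
    (h : ∀ᶠ r in atTop, f r ≤ K * g r) : ∃ A, ∀ r, f r ≤ A * g r := by
  obtain ⟨A, hA⟩ := (isBoundedUnder_of_eventually_le
    (h.mono fun r hr => (div_le_iff₀ (hg r)).2 hr)).bddAbove_range
  exact ⟨A, fun r => (div_le_iff₀ (hg r)).1 (hA ⟨r, rfl⟩)⟩

theorem exists_comparable_of_eventually (hf : ∀ r, 0 < f r) (hg : ∀ r, 0 < g r) {K : ℝ}
    (h : ∀ᶠ r in atTop, f r ≤ K * g r ∧ g r ≤ K * f r) :
    ∃ C, 1 < C ∧ ∀ r, C⁻¹ * g r ≤ f r ∧ f r ≤ C * g r := by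
  obtain ⟨A, hA⟩ := exists_forall_le_mul_of_eventually_le_mul hg (h.mono fun _ => And.left)
  obtain ⟨B, hB⟩ := exists_forall_le_mul_of_eventually_le_mul hf (h.mono fun _ => And.right)
  set C := max (max A B) 1 + 1
  have hAC : A ≤ C := by linarith [le_max_left A B, le_max_left (max A B) 1]
  have hBC : B ≤ C := by linarith [le_max_right A B, le_max_left (max A B) 1]
  have hC : 1 < C := by linarith [le_max_right (max A B) 1]
  refine ⟨C, hC, fun r => ⟨(inv_mul_le_iff₀ (one_pos.trans hC)).2 ?_, ?_⟩⟩
  · exact (hB r).trans (mul_le_mul_of_nonneg_right hBC (hf r).le)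
  · exact (hA r).trans (mul_le_mul_of_nonneg_right hAC (hg r).le)

end Comparable

theorem floyd_metrics_locally_lipschitz_iff_comparable_general
    {V : Type*} (G : SimpleGraph V) [G.LocallyFinite] (hT : G.IsTree)
    (n : ℕ) (hn : 3 ≤ n) (hreg : ∀ v : V, G.degree v = n)
    (h₁ h₂ : ℕ → ℝ) (hpos₁ : ∀ r, 0 < h₁ r) (hpos₂ : ∀ r, 0 < h₂ r)
    (hsum₁ : Summable h₁) (x₀ : V)
    {X₁ X₂ : Type*} [MetricSpace X₁] [MetricSpace X₂]
    [CompactSpace X₁]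
    (ι₁ : V → X₁) (ι₂ : V → X₂)
    (hdense₁ : DenseRange ι₁)
    (hdist₁ : ∀ (x y : V) (w : G.Walk x y), w.IsPath →
      dist (ι₁ x) (ι₁ y) = floydLength G x₀ h₁ w)
    (hdist₂ : ∀ (x y : V) (w : G.Walk x y), w.IsPath →
      dist (ι₂ x) (ι₂ y) = floydLength G x₀ h₂ w)
    (e : X₁ ≃ₜ X₂) (he : ∀ x : V, e (ι₁ x) = ι₂ x) :
    (∀ p : X₁, ∃ U ∈ nhds p, ∃ K : ℝ, 0 < K ∧ ∀ q ∈ U, ∀ q' ∈ U,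
        K⁻¹ * dist q q' ≤ dist (e q) (e q') ∧ dist (e q) (e q') ≤ K * dist q q')
    ↔ (∃ C : ℝ, 1 < C ∧ ∀ r : ℕ, C⁻¹ * h₂ r ≤ h₁ r ∧ h₁ r ≤ C * h₂ r) := by
  constructor
  · intro hloc
    obtain ⟨δ, hδ, K, hK, hball⟩ := exists_forall_bilipschitzOnWith_ball hloc
    refine exists_comparable_of_eventually hpos₁ hpos₂ (K := K) ?_
    have hdeg (v : V) : 2 ≤ G.degree v := by rw [hreg]; omega
    filter_upwards [hsum₁.tendsto_atTop_zero.eventually (gt_mem_nhds hδ)] with r hr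
    obtain ⟨u, v, huv, hu, hv⟩ := hT.exists_adj_dist_eq_and_dist_eq_add_one hdeg x₀ r
    have hd₁ := dist_eq_of_adj_of_dist_eq_add_one hdist₁ huv hu hv
    have hd₂ := dist_eq_of_adj_of_dist_eq_add_one hdist₂ huv hu hv
    have hv_mem : ι₁ v ∈ ball (ι₁ u) δ := by rwa [Metric.mem_ball, _root_.dist_comm, hd₁]
    have hedge := hball (ι₁ u) _ (mem_ball_self hδ) _ hv_mem
    rw [he, he, hd₁, hd₂] at hedge
    exact ⟨(inv_mul_le_iff₀ hK).1 hedge.1, hedge.2⟩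
  · rintro ⟨C, hC, hcomp⟩
    have hC₀ : 0 < C := one_pos.trans hC
    have h₁₂ := dist_le_mul_of_floyd_le_mul hT.connected hdist₁ hdist₂ fun r => (hcomp r).2
    have h₂₁ := dist_le_mul_of_floyd_le_mul hT.connected hdist₂ hdist₁
      fun r => (inv_mul_le_iff₀ hC₀).1 (hcomp r).1
    refine fun _ => ⟨Set.univ, univ_mem, C, hC₀, fun q _ q' _ => ⟨(inv_mul_le_iff₀ hC₀).2 ?_, ?_⟩⟩
    · exact hdense₁.forall_dist_le_mul continuous_id e.continuous (by simpa [he] using h₁₂) q q'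
    · exact hdense₁.forall_dist_le_mul e.continuous continuous_id (by simpa [he] using h₂₁) q q'

/-- Two Floyd metrics on the compactified regular tree, obtained from the same
base vertex `x₀` and Floyd functions `h₁, h₂` (modelled as two compact metric
spaces `X₁, X₂` in which the tree embeds densely with distances given by Floyd
lengths, identified by a homeomorphism `e`), are locally Lipschitz equivalent if
and only if `h₁` and `h₂` are comparable. -/
theorem floyd_metrics_locally_lipschitz_iff_comparable
    {V : Type*} (G : SimpleGraph V) [G.LocallyFinite] (hT : G.IsTree)
    (n : ℕ) (hn : 3 ≤ n) (hreg : ∀ v : V, G.degree v = n)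
    (h₁ h₂ : ℕ → ℝ) (hpos₁ : ∀ r, 0 < h₁ r) (hpos₂ : ∀ r, 0 < h₂ r)
    (hsum₁ : Summable h₁) (hsum₂ : Summable h₂) (x₀ : V)
    {X₁ X₂ : Type*} [MetricSpace X₁] [MetricSpace X₂]
    [CompactSpace X₁] [CompactSpace X₂]
    (ι₁ : V → X₁) (ι₂ : V → X₂)
    (hdense₁ : DenseRange ι₁) (hdense₂ : DenseRange ι₂)
    (hdist₁ : ∀ (x y : V) (w : G.Walk x y), w.IsPath →
      dist (ι₁ x) (ι₁ y) = floydLength G x₀ h₁ w)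
    (hdist₂ : ∀ (x y : V) (w : G.Walk x y), w.IsPath →
      dist (ι₂ x) (ι₂ y) = floydLength G x₀ h₂ w)
    (e : X₁ ≃ₜ X₂) (he : ∀ x : V, e (ι₁ x) = ι₂ x) :
    (∀ p : X₁, ∃ U ∈ nhds p, ∃ K : ℝ, 0 < K ∧ ∀ q ∈ U, ∀ q' ∈ U,
        K⁻¹ * dist q q' ≤ dist (e q) (e q') ∧ dist (e q) (e q') ≤ K * dist q q')
    ↔ (∃ C : ℝ, 1 < C ∧ ∀ r : ℕ, C⁻¹ * h₂ r ≤ h₁ r ∧ h₁ r ≤ C * h₂ r) :=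
  floyd_metrics_locally_lipschitz_iff_comparable_general G hT n hn hreg h₁ h₂ hpos₁ hpos₂ hsum₁ x₀
    ι₁ ι₂ hdense₁ hdist₁ hdist₂ e he
end

section
/- Suppose the Floyd compactification of 𝒯_n given by base point x₀ and Floyd function h is such that some unitary translation φ is locally bilipschitz at its attracting fixed boundary point p. Then there exist r₀ ∈ ℕ and η ∈ (0,1) such that h(r+1) ≥ η·h(r) for all r ≥ r₀; consequently (after modifying η) h(r+1) ≥ η'·h(r) for all r ∈ ℕ with some η' ∈ (0,1). -/
/-!
Along the attracting ray `y 0, y 1, …` of `φ` the tree forces `d(x₀, y i) = d₀ + i`, so the edge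
`[y i, y (i+1)]` has Floyd length `h (d₀ + i)`. The translation `φ` carries this edge to the next
one, and for large `i` both lie in the bilipschitz neighbourhood of `p`, whence
`k⁻¹ * h (d₀ + i) ≤ h (d₀ + i + 1)`. The finitely many remaining `r` are absorbed by the least of
the ratios `h (r + 1) / h r`.
-/

open SimpleGraph

open Filter Topology

theorem floydLength_toWalk {V : Type*} {G : SimpleGraph V} (x₀ : V) (h : ℕ → ℝ) {a b : V}
    (hab : G.Adj a b) :
    floydLength G x₀ h hab.toWalk = h (min (G.dist x₀ a) (G.dist x₀ b)) := by
  simp [floydLength, Adj.toWalk]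

namespace SimpleGraph

variable {V : Type*} {G : SimpleGraph V}

theorem IsTree.eq_of_adj_of_dist_add_one_eq_s16 (hT : G.IsTree) (x₀ : V) {a b c : V}
    (ha : G.Adj a c) (hb : G.Adj b c) (hda : G.dist x₀ a + 1 = G.dist x₀ c)
    (hdb : G.dist x₀ b + 1 = G.dist x₀ c) : a = b := by
  obtain ⟨pa, -, hla⟩ := hT.connected.exists_path_of_dist x₀ a
  obtain ⟨pb, -, hlb⟩ := hT.connected.exists_path_of_dist x₀ b
  have hpa : (pa.concat ha).IsPath := (pa.concat ha).isPath_of_length_eq_dist (by simp [hla, hda])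
  have hpb : (pb.concat hb).IsPath := (pb.concat hb).isPath_of_length_eq_dist (by simp [hlb, hdb])
  exact (Walk.concat_inj (congrArg Subtype.val
    ((hT.isAcyclic.subsingleton_path x₀ c).elim ⟨_, hpa⟩ ⟨_, hpb⟩))).1

/-- Once a non-backtracking walk in a tree steps away from `x₀`, it never turns back: a turn
would give a vertex two distinct neighbours closer to `x₀`. -/
theorem IsTree.dist_succ_of_nonbacktracking (hT : G.IsTree) (x₀ : V) {z : ℕ → V}
    (hadj : ∀ i, G.Adj (z i) (z (i + 1))) (hnb : ∀ i, z i ≠ z (i + 2))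
    (h01 : G.dist x₀ (z 0) ≤ G.dist x₀ (z 1)) (i : ℕ) :
    G.dist x₀ (z (i + 1)) = G.dist x₀ (z i) + 1 := by
  induction i with
  | zero =>
    have := hT.dist_eq_dist_add_one_of_adj x₀ (hadj 0)
    simp only [zero_add] at this ⊢
    omega
  | succ i ih =>
    rcases hT.dist_eq_dist_add_one_of_adj x₀ (hadj (i + 1)) with hback | hforth
    · exact absurd (hT.eq_of_adj_of_dist_add_one_eq_s16 x₀ (hadj i) (hadj (i + 1)).symm ih.symm
        hback.symm) (hnb i)
    · exact hforth

theorem IsTree.dist_eq_add_of_geodesic (hT : G.IsTree) (x₀ : V) {y : ℤ → V}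
    (hgeo : ∀ i j : ℤ, (G.dist (y i) (y j) : ℤ) = |i - j|)
    (h01 : G.dist x₀ (y 0) ≤ G.dist x₀ (y 1)) (i : ℕ) :
    G.dist x₀ (y i) = G.dist x₀ (y 0) + i := by
  have hgeo' (i j : ℕ) : G.dist (y i) (y ↑(i + j)) = j := by
    have := hgeo i ↑(i + j)
    rw [Nat.cast_add, show (i : ℤ) - (i + j) = -j by ring, abs_neg, Nat.abs_cast] at this
    exact_mod_cast this
  have hstep := hT.dist_succ_of_nonbacktracking x₀ (z := fun i : ℕ => y i)
    (fun i => dist_eq_one_iff_adj.1 (hgeo' i 1))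
    (fun i hz => by simpa [hz] using hgeo' i 2) (by simpa using h01)
  induction i with
  | zero => simp
  | succ i ih => rw [hstep i, ih]; ring

end SimpleGraph

theorem eventually_inv_mul_dist_le_of_orbit {V X : Type*} [PseudoMetricSpace X] (ι : V → X)
    (φ : V → V) {u : ℕ → V} (hφ : ∀ i, φ (u i) = u (i + 1)) {p : X}
    (hp : Tendsto (fun i => ι (u i)) atTop (𝓝 p)) {ε k : ℝ} (hε : 0 < ε)
    (hbil : ∀ x x' : V, dist (ι x) p < ε → dist (ι x') p < ε →
      k⁻¹ * dist (ι x) (ι x') ≤ dist (ι (φ x)) (ι (φ x'))) :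
    ∀ᶠ i in atTop, k⁻¹ * dist (ι (u i)) (ι (u (i + 1))) ≤
      dist (ι (u (i + 1))) (ι (u (i + 2))) := by
  have hnear : ∀ᶠ i in atTop, dist (ι (u i)) p < ε := Metric.tendsto_nhds.1 hp ε hε
  filter_upwards [hnear, (tendsto_add_atTop_iff_nat 1).2 hp |>.eventually
    (Metric.ball_mem_nhds p hε)] with i hi hi'
  simpa only [hφ] using hbil _ _ hi hi'

theorem exists_forall_mul_le_succ_of_forall_ge {h : ℕ → ℝ} (hpos : ∀ r, 0 < h r) {r₀ : ℕ}
    {η : ℝ} (hη : 0 < η) (hη1 : η < 1) (htail : ∀ r, r₀ ≤ r → η * h r ≤ h (r + 1)) :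
    ∃ η' : ℝ, 0 < η' ∧ η' < 1 ∧ ∀ r, η' * h r ≤ h (r + 1) := by
  have hmono {a b : ℝ} (r : ℕ) (hab : a ≤ b) (hb : b * h r ≤ h (r + 1)) : a * h r ≤ h (r + 1) :=
    (mul_le_mul_of_nonneg_right hab (hpos r).le).trans hb
  set μ := (Finset.range (r₀ + 1)).inf' ⟨0, by simp⟩ (fun r => h (r + 1) / h r)
  have hμ : 0 < μ := (Finset.lt_inf'_iff _).2 fun r _ => div_pos (hpos _) (hpos _)
  refine ⟨min η μ, lt_min hη hμ, (min_le_left _ _).trans_lt hη1, fun r => ?_⟩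
  rcases le_or_gt r₀ r with hr | hr
  · exact hmono r (min_le_left _ _) (htail r hr)
  · have hμr : μ ≤ h (r + 1) / h r := Finset.inf'_le _ (Finset.mem_range.2 (by omega))
    exact hmono r ((min_le_right _ _).trans hμr) (div_mul_cancel₀ _ (hpos r).ne').le

theorem locally_bilipschitz_at_attracting_point_gives_condition_general
    {V : Type*} (G : SimpleGraph V) (hT : G.IsTree)
    (h : ℕ → ℝ) (hpos : ∀ r, 0 < h r) (x₀ : V)
    {X : Type*} [MetricSpace X] (ι : V → X)
    (hdist : ∀ (x y : V) (w : G.Walk x y), w.IsPath →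
      dist (ι x) (ι y) = floydLength G x₀ h w)
    (φ : G ≃g G) (y : ℤ → V)
    (hgeo : ∀ i j : ℤ, (G.dist (y i) (y j) : ℤ) = |i - j|)
    (hφ : ∀ i : ℤ, φ (y i) = y (i + 1))
    (d₀ : ℕ) (hd₀min : ∀ i : ℤ, d₀ ≤ G.dist x₀ (y i)) (hd₀att : G.dist x₀ (y 0) = d₀)
    (p : X) (hp : Filter.Tendsto (fun i : ℕ => ι (y i)) Filter.atTop (nhds p))
    (ε k : ℝ) (hε : 0 < ε) (hk : 1 ≤ k)
    (hbil : ∀ x x' : V, dist (ι x) p < ε → dist (ι x') p < ε →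
      k⁻¹ * dist (ι x) (ι x') ≤ dist (ι (φ x)) (ι (φ x')) ∧
      dist (ι (φ x)) (ι (φ x')) ≤ k * dist (ι x) (ι x')) :
    (∃ r₀ : ℕ, ∃ η : ℝ, 0 < η ∧ η < 1 ∧ ∀ r : ℕ, r₀ ≤ r → η * h r ≤ h (r + 1)) ∧
    (∃ η' : ℝ, 0 < η' ∧ η' < 1 ∧ ∀ r : ℕ, η' * h r ≤ h (r + 1)) := by
  have hray : ∀ i : ℕ, G.dist x₀ (y i) = d₀ + i := by
    simpa only [hd₀att] using hT.dist_eq_add_of_geodesic x₀ hgeo (hd₀att ▸ hd₀min 1)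
  have hstep (i : ℕ) : dist (ι (y i)) (ι (y ↑(i + 1))) = h (d₀ + i) := by
    have hadj : G.Adj (y i) (y ↑(i + 1)) := dist_eq_one_iff_adj.1 (by simpa using hgeo i (i + 1))
    rw [hdist _ _ _ hadj.isPath_toWalk, floydLength_toWalk, hray, hray]
    exact congrArg h (by omega)
  obtain ⟨N, hN⟩ := eventually_atTop.1 <| eventually_inv_mul_dist_le_of_orbit ι φ
    (u := fun i : ℕ => y i) (fun i => by simpa using hφ i) hp hε
    (fun x x' hx hx' => (hbil x x' hx hx').1)
  -- `k⁻¹` itself may equal `1`, so halve it.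
  have htail (r : ℕ) (hr : d₀ + N ≤ r) : (2 * k)⁻¹ * h r ≤ h (r + 1) := by
    obtain ⟨i, rfl⟩ := Nat.exists_eq_add_of_le (le_of_add_le_left hr)
    have hi := hN i (by omega)
    simp only [hstep] at hi
    calc (2 * k)⁻¹ * h (d₀ + i) ≤ k⁻¹ * h (d₀ + i) :=
        mul_le_mul_of_nonneg_right (inv_anti₀ (by positivity) (by linarith)) (hpos _).le
      _ ≤ h (d₀ + i + 1) := hi
  have hη : 0 < (2 * k)⁻¹ := by positivity
  have hη1 : (2 * k)⁻¹ < 1 := inv_lt_one_of_one_lt₀ (by linarith)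
  exact ⟨⟨d₀ + N, _, hη, hη1, htail⟩, exists_forall_mul_le_succ_of_forall_ge hpos hη hη1 htail⟩

/-- If a unitary translation `φ` of the regular tree is locally bilipschitz at
its attracting boundary point `p` in the Floyd compactification, then the Floyd
function `h` satisfies `h (r+1) ≥ η * h r` for all `r ≥ r₀` and some
`η ∈ (0,1)`; consequently, after modifying `η`, the inequality holds for all
`r ∈ ℕ`. -/
theorem locally_bilipschitz_at_attracting_point_gives_condition
    {V : Type*} (G : SimpleGraph V) [G.LocallyFinite] (hT : G.IsTree)
    (n : ℕ) (hn : 3 ≤ n) (hreg : ∀ v : V, G.degree v = n)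
    (h : ℕ → ℝ) (hpos : ∀ r, 0 < h r) (hsum : Summable h) (x₀ : V)
    {X : Type*} [MetricSpace X] (ι : V → X)
    (hdist : ∀ (x y : V) (w : G.Walk x y), w.IsPath →
      dist (ι x) (ι y) = floydLength G x₀ h w)
    (φ : G ≃g G) (y : ℤ → V)
    (hgeo : ∀ i j : ℤ, (G.dist (y i) (y j) : ℤ) = |i - j|)
    (hφ : ∀ i : ℤ, φ (y i) = y (i + 1))
    (d₀ : ℕ) (hd₀min : ∀ i : ℤ, d₀ ≤ G.dist x₀ (y i)) (hd₀att : G.dist x₀ (y 0) = d₀)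
    (p : X) (hp : Filter.Tendsto (fun i : ℕ => ι (y i)) Filter.atTop (nhds p))
    (ε k : ℝ) (hε : 0 < ε) (hk : 1 ≤ k)
    (hbil : ∀ x x' : V, dist (ι x) p < ε → dist (ι x') p < ε →
      k⁻¹ * dist (ι x) (ι x') ≤ dist (ι (φ x)) (ι (φ x')) ∧
      dist (ι (φ x)) (ι (φ x')) ≤ k * dist (ι x) (ι x')) :
    (∃ r₀ : ℕ, ∃ η : ℝ, 0 < η ∧ η < 1 ∧ ∀ r : ℕ, r₀ ≤ r → η * h r ≤ h (r + 1)) ∧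
    (∃ η' : ℝ, 0 < η' ∧ η' < 1 ∧ ∀ r : ℕ, η' * h r ≤ h (r + 1)) :=
  locally_bilipschitz_at_attracting_point_gives_condition_general G hT h hpos x₀ ι hdist φ y hgeo hφ
    d₀ hd₀min hd₀att p hp ε k hε hk hbil
end
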